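/- arXiv:2205.10659 — 12 statements merged into one kernel-verified Lean document; each statement's English description precedes it below -/
import Mathlib

section
/- Let μ ∈ ℝ with μ ≠ a and μ ≠ b, and let p = (p₁,p₂) satisfy p₁²/(a−μ) + p₂²/(b−μ) = 1 (so p lies on the confocal quadric with parameter μ). Set n = (p₁/(a−μ), p₂/(b−μ)); then n ≠ 0, and for every v ∈ ℝ² the billiard-reflected velocity v' = v − 2·(⟨v,n⟩/⟨n,n⟩)·n satisfies Λ(p, v') = Λ(p, v). Thus the caustic integral is preserved under billiard reflection in any quadric of the confocal family (integrability of the billiard, Kozlov–Treshchev). -/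
/-- The caustic integral `Λ(p,v) = v₁²/a + v₂²/b − (v₁p₂ − p₁v₂)²/(ab)`. -/
noncomputable def caustic (a b p₁ p₂ v₁ v₂ : ℝ) : ℝ :=
  v₁ ^ 2 / a + v₂ ^ 2 / b - (v₁ * p₂ - p₁ * v₂) ^ 2 / (a * b)

/-!
For fixed `p`, the form `v ↦ ab·Λ(p,v)` is the quadratic form of a symmetric matrix `M`, and the
normal `n` at `p` to the confocal conic of parameter `μ` is an eigenvector of `M`. The reflection
`v ↦ v − 2(⟨v,n⟩/⟨n,n⟩)n` fixes `n^⊥` and negates `n`, and these two lines are orthogonal for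
the form of `M` because `n` is an eigenvector; so the reflection preserves that form.
-/

open Matrix

theorem Matrix.IsSymm.dotProduct_mulVec_reflection {K ι : Type*} [Field K] [Fintype ι]
    {M : Matrix ι ι K} (hM : M.IsSymm) {n : ι → K} {c : K} (hn : M *ᵥ n = c • n)
    (v : ι → K) :
    (v - (2 * (v ⬝ᵥ n / n ⬝ᵥ n)) • n) ⬝ᵥ M *ᵥ (v - (2 * (v ⬝ᵥ n / n ⬝ᵥ n)) • n) =
      v ⬝ᵥ M *ᵥ v := by
  have hnM : n ⬝ᵥ M *ᵥ v = c * (v ⬝ᵥ n) := by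
    rw [dotProduct_mulVec, ← mulVec_transpose, hM.eq, hn, smul_dotProduct, dotProduct_comm,
      smul_eq_mul]
  by_cases hnn : n ⬝ᵥ n = 0
  · simp [hnn]
  · simp only [mulVec_sub, mulVec_smul, hn, sub_dotProduct, dotProduct_sub, smul_dotProduct,
      dotProduct_smul, hnM, smul_eq_mul]
    field_simp
    ring

def causticMatrix (a b p₁ p₂ : ℝ) : Matrix (Fin 2) (Fin 2) ℝ :=
  !![b - p₂ ^ 2, p₁ * p₂; p₁ * p₂, a - p₁ ^ 2]

theorem causticMatrix_isSymm (a b p₁ p₂ : ℝ) : (causticMatrix a b p₁ p₂).IsSymm := by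
  ext i j
  fin_cases i <;> fin_cases j <;> simp [causticMatrix]

theorem causticMatrix_mulVec (a b p₁ p₂ v₁ v₂ : ℝ) :
    causticMatrix a b p₁ p₂ *ᵥ ![v₁, v₂] =
      ![(b - p₂ ^ 2) * v₁ + p₁ * p₂ * v₂, p₁ * p₂ * v₁ + (a - p₁ ^ 2) * v₂] := by
  simp only [causticMatrix, mulVec_fin_two, of_apply, cons_val', cons_val_zero, cons_val_one,
    empty_val', cons_val_fin_one]

theorem caustic_eq_dotProduct_mulVec {a b : ℝ} (ha : a ≠ 0) (hb : b ≠ 0) (p₁ p₂ v₁ v₂ : ℝ) :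
    caustic a b p₁ p₂ v₁ v₂ = ![v₁, v₂] ⬝ᵥ causticMatrix a b p₁ p₂ *ᵥ ![v₁, v₂] / (a * b) := by
  rw [causticMatrix_mulVec, vec2_dotProduct', caustic]
  field_simp
  ring

/-- The eigenvalue `a + b − |p|² − μ` is the parameter of the other confocal conic through `p`. -/
theorem causticMatrix_mulVec_normal {a b μ p₁ p₂ : ℝ} (hμa : μ ≠ a) (hμb : μ ≠ b)
    (hp : p₁ ^ 2 / (a - μ) + p₂ ^ 2 / (b - μ) = 1) :
    causticMatrix a b p₁ p₂ *ᵥ ![p₁ / (a - μ), p₂ / (b - μ)] =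
      (a + b - p₁ ^ 2 - p₂ ^ 2 - μ) • ![p₁ / (a - μ), p₂ / (b - μ)] := by
  have hA : a - μ ≠ 0 := sub_ne_zero.mpr hμa.symm
  have hB : b - μ ≠ 0 := sub_ne_zero.mpr hμb.symm
  field_simp at hp
  rw [causticMatrix_mulVec, smul_vec2, smul_eq_mul, smul_eq_mul]
  refine vec2_eq ?_ ?_
  · field_simp
    linear_combination p₁ * hp
  · field_simp
    linear_combination p₂ * hp

/-- Integrability of the billiard (Kozlov–Treshchev): the caustic integral is
preserved under billiard reflection in any quadric of the confocal family.
Here `n = (p₁/(a−μ), p₂/(b−μ))` is the normal to the quadric of parameter `μ`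
at the point `p`, and the reflected velocity is `v' = v − 2(⟨v,n⟩/⟨n,n⟩)n`. -/
theorem caustic_reflection_invariant (a b : ℝ) (hb : 0 < b) (hba : b < a)
    (μ : ℝ) (hμa : μ ≠ a) (hμb : μ ≠ b)
    (p₁ p₂ : ℝ) (hp : p₁ ^ 2 / (a - μ) + p₂ ^ 2 / (b - μ) = 1) :
    ((p₁ / (a - μ), p₂ / (b - μ)) : ℝ × ℝ) ≠ (0, 0) ∧
    ∀ v₁ v₂ : ℝ,
      caustic a b p₁ p₂
        (v₁ - 2 * ((v₁ * (p₁ / (a - μ)) + v₂ * (p₂ / (b - μ))) /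
            ((p₁ / (a - μ)) * (p₁ / (a - μ)) + (p₂ / (b - μ)) * (p₂ / (b - μ)))) *
          (p₁ / (a - μ)))
        (v₂ - 2 * ((v₁ * (p₁ / (a - μ)) + v₂ * (p₂ / (b - μ))) /
            ((p₁ / (a - μ)) * (p₁ / (a - μ)) + (p₂ / (b - μ)) * (p₂ / (b - μ)))) *
          (p₂ / (b - μ)))
      = caustic a b p₁ p₂ v₁ v₂ := by
  refine ⟨fun hn => ?_, fun v₁ v₂ => ?_⟩
  · simp only [Prod.mk.injEq, div_eq_zero_iff, sub_eq_zero, hμa.symm, hμb.symm, or_false] at hn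
    simp [hn.1, hn.2] at hp
  have ha : a ≠ 0 := (hb.trans hba).ne'
  have hreflect := (causticMatrix_isSymm a b p₁ p₂).dotProduct_mulVec_reflection
    (causticMatrix_mulVec_normal hμa hμb hp) ![v₁, v₂]
  simp only [vec2_dotProduct', smul_cons, smul_empty, smul_eq_mul, cons_sub_cons,
    empty_sub_empty] at hreflect
  rw [caustic_eq_dotProduct_mulVec ha hb.ne', caustic_eq_dotProduct_mulVec ha hb.ne', hreflect]
end

section
/- Let λ ∈ ℝ with λ ≠ a and λ ≠ b, let p = (p₁,p₂) ∈ ℝ² and let v = (v₁,v₂) be a unit vector (v₁² + v₂² = 1). Then the following Joachimsthal-type identity holds: (p₁v₁/(a−λ) + p₂v₂/(b−λ))² − (v₁²/(a−λ) + v₂²/(b−λ))·(p₁²/(a−λ) + p₂²/(b−λ) − 1) = (ab·Λ(p,v) − λ)/((a−λ)(b−λ)). In particular, the discriminant of the intersection of the line t ↦ p + t·v with the confocal quadric of parameter λ vanishes exactly when λ = ab·Λ(p,v). -/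
theorem mul_mul_caustic {a b : ℝ} (ha : a ≠ 0) (hb : b ≠ 0) (p₁ p₂ v₁ v₂ : ℝ) :
    a * b * caustic a b p₁ p₂ v₁ v₂ = b * v₁ ^ 2 + a * v₂ ^ 2 - (v₁ * p₂ - p₁ * v₂) ^ 2 := by
  unfold caustic
  field_simp

-- A polynomial identity in `A⁻¹` and `B⁻¹`, hence true even when `A` or `B` vanishes.
theorem joachimsthal_discriminant (A B p₁ p₂ v₁ v₂ : ℝ) :
    (p₁ * v₁ / A + p₂ * v₂ / B) ^ 2
      - (v₁ ^ 2 / A + v₂ ^ 2 / B) * (p₁ ^ 2 / A + p₂ ^ 2 / B - 1)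
    = v₁ ^ 2 / A + v₂ ^ 2 / B - (v₁ * p₂ - p₁ * v₂) ^ 2 / (A * B) := by
  simp only [div_eq_mul_inv, mul_inv]
  ring

/-- Joachimsthal-type identity: the discriminant of the intersection of the line
`t ↦ p + t·v` with the confocal quadric of parameter `λ` equals
`(ab·Λ(p,v) − λ)/((a−λ)(b−λ))`. -/
theorem joachimsthal_identity (a b : ℝ) (hb : 0 < b) (hba : b < a)
    (lam : ℝ) (hla : lam ≠ a) (hlb : lam ≠ b)
    (p₁ p₂ v₁ v₂ : ℝ) (hv : v₁ ^ 2 + v₂ ^ 2 = 1) :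
    (p₁ * v₁ / (a - lam) + p₂ * v₂ / (b - lam)) ^ 2
      - (v₁ ^ 2 / (a - lam) + v₂ ^ 2 / (b - lam)) *
        (p₁ ^ 2 / (a - lam) + p₂ ^ 2 / (b - lam) - 1)
    = (a * b * caustic a b p₁ p₂ v₁ v₂ - lam) / ((a - lam) * (b - lam)) := by
  have hA : a - lam ≠ 0 := sub_ne_zero.mpr hla.symm
  have hB : b - lam ≠ 0 := sub_ne_zero.mpr hlb.symm
  rw [joachimsthal_discriminant, mul_mul_caustic (hb.trans hba).ne' hb.ne']
  field_simp
  linear_combination (-lam) * hv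
end

section
/- Let p = (p₁,p₂) ∈ ℝ², let v = (v₁,v₂) be a unit vector (v₁² + v₂² = 1), and set λ = ab·Λ(p,v). Assume λ ≠ a, λ ≠ b, and V := v₁²/(a−λ) + v₂²/(b−λ) ≠ 0. Then there exists t₀ ∈ ℝ such that for every t ∈ ℝ, (p₁ + t·v₁)²/(a−λ) + (p₂ + t·v₂)²/(b−λ) − 1 = V·(t − t₀)². In other words, the straight line through p with direction v is tangent to the quadric of the confocal family whose parameter is λ = ab·Λ(p,v): this quadric is the caustic of the trajectory. -/
theorem quadratic_eq_mul_sq_of_discrim_eq_zero {K : Type*} [Field K] [NeZero (2 : K)]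
    {a b c : K} (ha : a ≠ 0) (h : discrim a b c = 0) (x : K) :
    a * (x * x) + b * x + c = a * (x - -b / (2 * a)) ^ 2 := by
  rw [discrim] at h
  have h2 : (2 : K) ≠ 0 := NeZero.ne 2
  field_simp
  linear_combination -h

theorem discrim_conic_along_line {A B : ℝ} (hA : A ≠ 0) (hB : B ≠ 0) (p₁ p₂ v₁ v₂ : ℝ) :
    discrim (v₁ ^ 2 / A + v₂ ^ 2 / B) (2 * (p₁ * v₁ / A + p₂ * v₂ / B)) (p₁ ^ 2 / A + p₂ ^ 2 / B - 1)
      = 4 * (v₁ ^ 2 * B + v₂ ^ 2 * A - (v₁ * p₂ - p₁ * v₂) ^ 2) / (A * B) := by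
  rw [discrim]
  field_simp
  ring

theorem exists_conic_along_line_eq_mul_sq {A B : ℝ} (hA : A ≠ 0) (hB : B ≠ 0)
    {p₁ p₂ v₁ v₂ : ℝ} (hV : v₁ ^ 2 / A + v₂ ^ 2 / B ≠ 0)
    (htangent : v₁ ^ 2 * B + v₂ ^ 2 * A = (v₁ * p₂ - p₁ * v₂) ^ 2) :
    ∃ t₀ : ℝ, ∀ t : ℝ, (p₁ + t * v₁) ^ 2 / A + (p₂ + t * v₂) ^ 2 / B - 1
      = (v₁ ^ 2 / A + v₂ ^ 2 / B) * (t - t₀) ^ 2 := by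
  have hdiscrim := discrim_conic_along_line hA hB p₁ p₂ v₁ v₂
  rw [htangent, sub_self, mul_zero, zero_div] at hdiscrim
  refine ⟨_, fun t => Eq.trans ?_ (quadratic_eq_mul_sq_of_discrim_eq_zero hV hdiscrim t)⟩
  ring

/-- The straight line through `p` with unit direction `v` is tangent to the quadric
of the confocal family with parameter `λ = ab·Λ(p,v)`: this quadric is the caustic
of the trajectory. -/
theorem line_tangent_to_caustic (a b : ℝ) (hb : 0 < b) (hba : b < a)
    (p₁ p₂ v₁ v₂ : ℝ) (hv : v₁ ^ 2 + v₂ ^ 2 = 1)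
    (hla : a * b * caustic a b p₁ p₂ v₁ v₂ ≠ a)
    (hlb : a * b * caustic a b p₁ p₂ v₁ v₂ ≠ b)
    (hV : v₁ ^ 2 / (a - a * b * caustic a b p₁ p₂ v₁ v₂)
        + v₂ ^ 2 / (b - a * b * caustic a b p₁ p₂ v₁ v₂) ≠ 0) :
    ∃ t₀ : ℝ, ∀ t : ℝ,
      (p₁ + t * v₁) ^ 2 / (a - a * b * caustic a b p₁ p₂ v₁ v₂)
        + (p₂ + t * v₂) ^ 2 / (b - a * b * caustic a b p₁ p₂ v₁ v₂) - 1
      = (v₁ ^ 2 / (a - a * b * caustic a b p₁ p₂ v₁ v₂)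
          + v₂ ^ 2 / (b - a * b * caustic a b p₁ p₂ v₁ v₂)) * (t - t₀) ^ 2 := by
  set l := a * b * caustic a b p₁ p₂ v₁ v₂ with hl
  rw [mul_mul_caustic (hb.trans hba).ne' hb.ne'] at hl
  refine exists_conic_along_line_eq_mul_sq (sub_ne_zero.mpr hla.symm) (sub_ne_zero.mpr hlb.symm)
    hV ?_
  linear_combination -l * hv - hl
end

section
/- For every point (x,y) ∈ ℝ² with x ≠ 0 and y ≠ 0, there exists a unique λ with λ < b such that x²/(a−λ) + y²/(b−λ) = 1. That is, through every point of the plane not lying on the coordinate axes there passes exactly one ellipse of the confocal family (Jacobi–Chasles, elliptic part). -/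
/-! Clearing denominators, a parameter `λ < b` lies on the confocal ellipse through `(x, y)`
exactly when `λ` is a root of the monic quadratic `(a - λ)(b - λ) - x²(b - λ) - y²(a - λ)`.
Its value at `λ = b` is `-(a - b) y² < 0`, and a monic quadratic that is negative at `b` has
exactly one root below `b`. -/

theorem existsUnique_lt_root_of_quadratic_neg {p q r : ℝ} (h : r ^ 2 - p * r + q < 0) :
    ∃! t : ℝ, t < r ∧ t ^ 2 - p * t + q = 0 := by
  have hdisc : (2 * r - p) ^ 2 < p ^ 2 - 4 * q := by linarith
  set s := Real.sqrt (p ^ 2 - 4 * q)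
  have hs_sq : s ^ 2 = p ^ 2 - 4 * q := Real.sq_sqrt (by linarith [sq_nonneg (2 * r - p)])
  have hs : |2 * r - p| < s := Real.lt_sqrt_of_sq_lt (by rwa [sq_abs])
  refine ⟨(p - s) / 2,
    ⟨by linarith [neg_abs_le (2 * r - p)], by linear_combination hs_sq / 4⟩, ?_⟩
  rintro t ⟨htr, ht⟩
  have hroots : (2 * t - p + s) * (2 * t - p - s) = 0 := by linear_combination 4 * ht - hs_sq
  rcases mul_eq_zero.mp hroots with hsmall | hlarge
  · linarith
  · linarith [le_abs_self (2 * r - p)]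

theorem confocal_eq_one_iff {a b x y lam : ℝ} (ha : lam ≠ a) (hb : lam ≠ b) :
    x ^ 2 / (a - lam) + y ^ 2 / (b - lam) = 1 ↔
      lam ^ 2 - (a + b - x ^ 2 - y ^ 2) * lam + (a * b - b * x ^ 2 - a * y ^ 2) = 0 := by
  have ha' : a - lam ≠ 0 := sub_ne_zero.mpr (Ne.symm ha)
  have hb' : b - lam ≠ 0 := sub_ne_zero.mpr (Ne.symm hb)
  rw [div_add_div _ _ ha' hb', div_eq_one_iff_eq (mul_ne_zero ha' hb')]
  constructor <;> intro h <;> linear_combination -h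

theorem jacobi_chasles_ellipse_general (a b : ℝ) (hba : b < a)
    (x y : ℝ) (hy : y ≠ 0) :
    ∃! lam : ℝ, lam < b ∧ x ^ 2 / (a - lam) + y ^ 2 / (b - lam) = 1 := by
  have hneg : b ^ 2 - (a + b - x ^ 2 - y ^ 2) * b + (a * b - b * x ^ 2 - a * y ^ 2) < 0 := by
    have : 0 < (a - b) * y ^ 2 := mul_pos (sub_pos.mpr hba) (by positivity)
    linarith
  refine (existsUnique_congr fun lam => and_congr_right fun hlt => ?_).mpr
    (existsUnique_lt_root_of_quadratic_neg hneg)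
  exact confocal_eq_one_iff (by linarith) hlt.ne

/-- Jacobi–Chasles (elliptic part): through every point of the plane not lying
on the coordinate axes there passes exactly one ellipse of the confocal family
`x²/(a−λ) + y²/(b−λ) = 1`, i.e. exactly one parameter `λ < b`. -/
theorem jacobi_chasles_ellipse (a b : ℝ) (hb : 0 < b) (hba : b < a)
    (x y : ℝ) (hx : x ≠ 0) (hy : y ≠ 0) :
    ∃! lam : ℝ, lam < b ∧ x ^ 2 / (a - lam) + y ^ 2 / (b - lam) = 1 :=
  jacobi_chasles_ellipse_general a b hba x y hy
end

section
/- Let p = (p₁,p₂) ∈ ℝ², let v = (v₁,v₂) be a unit vector (v₁² + v₂² = 1), and set λ = ab·Λ(p,v). If λ < b, then p₁²/(a−λ) + p₂²/(b−λ) ≥ 1; that is, when the caustic is an ellipse of the confocal family, every point of the trajectory lies outside or on that caustic ellipse (the region of possible motion lies outside the caustic). -/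
-- Homogenised in `N = |v|²`, so that it holds without the unit-vector hypothesis.
theorem confocal_tangency_identity (a b p₁ p₂ v₁ v₂ : ℝ) :
    let N := v₁ ^ 2 + v₂ ^ 2
    let L := b * v₁ ^ 2 + a * v₂ ^ 2 - (v₁ * p₂ - p₁ * v₂) ^ 2
    N * (p₁ ^ 2 * (b * N - L) + p₂ ^ 2 * (a * N - L)) - (a * N - L) * (b * N - L)
      = ((v₁ * p₂ - p₁ * v₂) * (p₁ * v₁ + p₂ * v₂) + (a - b) * v₁ * v₂) ^ 2 := by
  intro N L
  ring

theorem sub_mul_sub_caustic_le {a b : ℝ} (ha : a ≠ 0) (hb : b ≠ 0) (p₁ p₂ : ℝ) {v₁ v₂ : ℝ}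
    (hv : v₁ ^ 2 + v₂ ^ 2 = 1) :
    (a - a * b * caustic a b p₁ p₂ v₁ v₂) * (b - a * b * caustic a b p₁ p₂ v₁ v₂)
      ≤ p₁ ^ 2 * (b - a * b * caustic a b p₁ p₂ v₁ v₂)
        + p₂ ^ 2 * (a - a * b * caustic a b p₁ p₂ v₁ v₂) := by
  have hL : a * b * caustic a b p₁ p₂ v₁ v₂ = b * v₁ ^ 2 + a * v₂ ^ 2 - (v₁ * p₂ - p₁ * v₂) ^ 2 :=
    mul_mul_caustic ha hb p₁ p₂ v₁ v₂
  have tangency := confocal_tangency_identity a b p₁ p₂ v₁ v₂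
  simp only [hv, one_mul, mul_one, ← hL] at tangency
  linarith [tangency, sq_nonneg ((v₁ * p₂ - p₁ * v₂) * (p₁ * v₁ + p₂ * v₂) + (a - b) * v₁ * v₂)]

/-- When the caustic is an ellipse of the confocal family (`λ = ab·Λ(p,v) < b`),
every point of the trajectory lies outside or on that caustic ellipse. -/
theorem point_outside_elliptic_caustic (a b : ℝ) (hb : 0 < b) (hba : b < a)
    (p₁ p₂ v₁ v₂ : ℝ) (hv : v₁ ^ 2 + v₂ ^ 2 = 1)
    (hl : a * b * caustic a b p₁ p₂ v₁ v₂ < b) :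
    p₁ ^ 2 / (a - a * b * caustic a b p₁ p₂ v₁ v₂)
      + p₂ ^ 2 / (b - a * b * caustic a b p₁ p₂ v₁ v₂) ≥ 1 := by
  have hbL : 0 < b - a * b * caustic a b p₁ p₂ v₁ v₂ := by linarith
  have haL : 0 < a - a * b * caustic a b p₁ p₂ v₁ v₂ := by linarith
  rw [ge_iff_le, div_add_div _ _ haL.ne' hbL.ne', one_le_div (mul_pos haL hbL)]
  linarith [sub_mul_sub_caustic_le (hb.trans hba).ne' hb.ne' p₁ p₂ hv]
end

section
/- Let p = (p₁,p₂) ∈ ℝ² and let v = (v₁,v₂) be a unit vector (v₁² + v₂² = 1). Then ab·Λ(p,v) = b if and only if there exists t ∈ ℝ with p + t·v = (√(a−b), 0) or p + t·v = (−√(a−b), 0). That is, the critical level ab·Λ = b consists exactly of the states whose trajectory line passes through one of the foci of the confocal family. -/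
theorem exists_add_mul_eq_iff_mul_eq_mul {p₁ p₂ v₁ v₂ q₁ q₂ : ℝ} (hv : v₁ ≠ 0 ∨ v₂ ≠ 0) :
    (∃ t : ℝ, p₁ + t * v₁ = q₁ ∧ p₂ + t * v₂ = q₂) ↔ (p₁ - q₁) * v₂ = (p₂ - q₂) * v₁ := by
  constructor
  · rintro ⟨t, h₁, h₂⟩
    linear_combination v₂ * h₁ - v₁ * h₂
  · intro h
    rcases hv with hv₁ | hv₂
    · refine ⟨(q₁ - p₁) / v₁, by field_simp; ring, ?_⟩
      field_simp
      linear_combination -h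
    · refine ⟨(q₂ - p₂) / v₂, ?_, by field_simp; ring⟩
      field_simp
      linear_combination h

/-- The critical level `ab·Λ = b` consists exactly of the states whose trajectory
line passes through one of the foci `(±√(a−b), 0)` of the confocal family. -/
theorem critical_level_through_focus (a b : ℝ) (hb : 0 < b) (hba : b < a)
    (p₁ p₂ v₁ v₂ : ℝ) (hv : v₁ ^ 2 + v₂ ^ 2 = 1) :
    a * b * caustic a b p₁ p₂ v₁ v₂ = b ↔
      ∃ t : ℝ,
        (p₁ + t * v₁ = Real.sqrt (a - b) ∧ p₂ + t * v₂ = 0) ∨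
        (p₁ + t * v₁ = -Real.sqrt (a - b) ∧ p₂ + t * v₂ = 0) := by
  set c := Real.sqrt (a - b)
  have hc : c ^ 2 = a - b := Real.sq_sqrt (by linarith)
  have hv₀ : v₁ ≠ 0 ∨ v₂ ≠ 0 := by
    by_contra! h
    simp [h.1, h.2] at hv
  have hΛ : a * b * caustic a b p₁ p₂ v₁ v₂ - b =
      -(((p₁ - c) * v₂ - p₂ * v₁) * ((p₁ + c) * v₂ - p₂ * v₁)) := by
    rw [mul_mul_caustic (by linarith) hb.ne']
    linear_combination b * hv - v₂ ^ 2 * hc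
  rw [exists_or, exists_add_mul_eq_iff_mul_eq_mul hv₀, exists_add_mul_eq_iff_mul_eq_mul hv₀,
    ← sub_eq_zero, hΛ, neg_eq_zero, mul_eq_zero, sub_eq_zero, sub_eq_zero, sub_zero,
    sub_neg_eq_add]
end

section
/- (Optical property of the ellipse.) Let λ < b, let p = (p₁,p₂) satisfy p₁²/(a−λ) + p₂²/(b−λ) = 1, and set c = √(a−b) and n = (p₁/(a−λ), p₂/(b−λ)). Suppose v ∈ ℝ² is nonzero and there exists t ∈ ℝ with p + t·v = (c, 0), i.e. the incoming trajectory line passes through the focus (c,0). Then the reflected velocity v' = v − 2·(⟨v,n⟩/⟨n,n⟩)·n satisfies: there exists s ∈ ℝ with p + s·v' = (−c, 0). That is, a trajectory through one focus reflects off the ellipse into a trajectory through the other focus. -/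
/-!
The directions from `p` to the foci `F₁ = (c, 0)` and `F₂ = (-c, 0)` are exchanged, up to a
scalar, by the reflection in the tangent line. Writing `A = a - λ`, `B = b - λ` (so that
`c² = A - B`), the ellipse equation gives `⟨F₁ - p, n⟩ = (c p₁ - A) / A` and
`⟨F₂ - p, n⟩ = -(c p₁ + A) / A`; with `μ = (c p₁ - A) / (c p₁ + A)` the vector
`(F₁ - p) - μ (F₂ - p)` is parallel to `n` while `(F₁ - p) + μ (F₂ - p)` is orthogonal to it,
so the reflection maps `F₁ - p` to `μ (F₂ - p)`. Finally `μ ≠ 0` because the foci lie strictly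
inside the ellipse: `|c p₁| < A`.
-/

open Matrix

section DotReflect

variable {ι 𝕜 : Type*} [Fintype ι] [Field 𝕜]

def dotReflect (n u : ι → 𝕜) : ι → 𝕜 :=
  u - (2 * (u ⬝ᵥ n / n ⬝ᵥ n)) • n

theorem dotReflect_smul (n u : ι → 𝕜) (r : 𝕜) :
    dotReflect n (r • u) = r • dotReflect n u := by
  simp only [dotReflect, smul_dotProduct, smul_sub, smul_smul, smul_eq_mul]
  congr 2
  ring

theorem dotReflect_eq_of_sub_eq_smul {n u w : ι → 𝕜} {k : 𝕜} (hn : n ⬝ᵥ n ≠ 0)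
    (hsub : u - w = k • n) (horth : (u + w) ⬝ᵥ n = 0) : dotReflect n u = w := by
  have hk : 2 * (u ⬝ᵥ n / n ⬝ᵥ n) = k := by
    have h : 2 * u ⬝ᵥ n = (u - w) ⬝ᵥ n + (u + w) ⬝ᵥ n := by
      rw [sub_dotProduct, add_dotProduct]; ring
    rw [hsub, horth, smul_dotProduct, smul_eq_mul, add_zero] at h
    rw [mul_div_assoc', div_eq_iff hn]
    exact h
  rw [dotReflect, hk, ← hsub, sub_sub_cancel]

end DotReflect

section Ellipse

variable {A B c p₁ p₂ : ℝ}

theorem abs_mul_lt_of_ellipse (hA : 0 < A) (hB : 0 < B) (hc : c ^ 2 = A - B)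
    (hp : p₁ ^ 2 * B + p₂ ^ 2 * A = A * B) : |c * p₁| < A := by
  have hp₁ : p₁ ^ 2 ≤ A := by nlinarith [sq_nonneg p₂]
  refine abs_lt_of_sq_lt_sq ?_ hA.le
  calc (c * p₁) ^ 2 = (A - B) * p₁ ^ 2 := by rw [mul_pow, hc]
    _ ≤ (A - B) * A := by gcongr; nlinarith
    _ < A ^ 2 := by nlinarith

theorem dotReflect_sub_focus (hA : 0 < A) (hB : 0 < B) (hc : c ^ 2 = A - B)
    (hp : p₁ ^ 2 * B + p₂ ^ 2 * A = A * B) :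
    dotReflect ![p₁ / A, p₂ / B] ![c - p₁, -p₂] =
      ((c * p₁ - A) / (c * p₁ + A)) • ![-c - p₁, -p₂] := by
  have hadd : c * p₁ + A ≠ 0 := by
    have := abs_lt.mp (abs_mul_lt_of_ellipse hA hB hc hp); linarith
  have hn : ![p₁ / A, p₂ / B] ⬝ᵥ ![p₁ / A, p₂ / B] ≠ 0 := by
    rw [Ne, dotProduct_self_eq_zero]
    intro h
    have h₁ : p₁ = 0 := by simpa [hA.ne'] using congrFun h 0
    have h₂ : p₂ = 0 := by simpa [hB.ne'] using congrFun h 1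
    subst h₁ h₂
    nlinarith [mul_pos hA hB]
  refine dotReflect_eq_of_sub_eq_smul (k := -2 * A * B / (c * p₁ + A)) hn ?_ ?_
  · ext i
    fin_cases i <;>
      simp only [Fin.zero_eta, Fin.mk_one, Pi.sub_apply, Pi.smul_apply, cons_val_zero, cons_val_one,
        cons_val_fin_one, smul_eq_mul] <;>
      field_simp
    · linear_combination 2 * p₁ * hc
    · ring
  · simp only [dotProduct, Fin.sum_univ_two, Pi.add_apply, Pi.smul_apply, cons_val_zero, cons_val_one,
      cons_val_fin_one, smul_eq_mul]
    field_simp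
    linear_combination (-2 * p₁ * c) * hp

theorem exists_add_smul_dotReflect_eq_focus (hA : 0 < A) (hB : 0 < B) (hc : c ^ 2 = A - B)
    (hp : p₁ ^ 2 * B + p₂ ^ 2 * A = A * B) {v₁ v₂ t : ℝ} (ht₁ : p₁ + t * v₁ = c)
    (ht₂ : p₂ + t * v₂ = 0) :
    ∃ s : ℝ, ![p₁, p₂] + s • dotReflect ![p₁ / A, p₂ / B] ![v₁, v₂] = ![-c, 0] := by
  obtain ⟨hlt, hgt⟩ := abs_lt.mp (abs_mul_lt_of_ellipse hA hB hc hp)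
  have hsub : c * p₁ - A ≠ 0 := by linarith
  have hadd : c * p₁ + A ≠ 0 := by linarith
  have ht : t ≠ 0 := by
    rintro rfl
    simp only [zero_mul, add_zero] at ht₁ ht₂
    subst ht₁ ht₂
    nlinarith
  have hv : ![v₁, v₂] = t⁻¹ • ![c - p₁, -p₂] := by
    ext i
    fin_cases i <;>
      simp only [Fin.zero_eta, Fin.mk_one, Pi.smul_apply, cons_val_zero, cons_val_one,
        cons_val_fin_one, smul_eq_mul] <;>
      field_simp <;>
      linarith
  refine ⟨t / ((c * p₁ - A) / (c * p₁ + A)), ?_⟩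
  rw [hv, dotReflect_smul, dotReflect_sub_focus hA hB hc hp, smul_smul, smul_smul]
  have hscale : t / ((c * p₁ - A) / (c * p₁ + A)) * t⁻¹ * ((c * p₁ - A) / (c * p₁ + A)) = 1 := by
    field_simp
  rw [hscale, one_smul]
  ext i
  fin_cases i <;> simp

end Ellipse

theorem ellipse_optical_property_general (a b : ℝ) (hba : b < a)
    (lam : ℝ) (hl : lam < b)
    (p₁ p₂ : ℝ) (hp : p₁ ^ 2 / (a - lam) + p₂ ^ 2 / (b - lam) = 1)
    (v₁ v₂ : ℝ)
    (hfocus : ∃ t : ℝ, p₁ + t * v₁ = Real.sqrt (a - b) ∧ p₂ + t * v₂ = 0) :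
    ∃ s : ℝ,
      p₁ + s * (v₁ - 2 * ((v₁ * (p₁ / (a - lam)) + v₂ * (p₂ / (b - lam))) /
          ((p₁ / (a - lam)) * (p₁ / (a - lam)) + (p₂ / (b - lam)) * (p₂ / (b - lam)))) *
          (p₁ / (a - lam))) = -Real.sqrt (a - b) ∧
      p₂ + s * (v₂ - 2 * ((v₁ * (p₁ / (a - lam)) + v₂ * (p₂ / (b - lam))) /
          ((p₁ / (a - lam)) * (p₁ / (a - lam)) + (p₂ / (b - lam)) * (p₂ / (b - lam)))) *
          (p₂ / (b - lam))) = 0 := by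
  obtain ⟨t, ht₁, ht₂⟩ := hfocus
  set A := a - lam
  set B := b - lam
  set c := Real.sqrt (a - b)
  have hA : 0 < A := by linarith
  have hB : 0 < B := by linarith
  have hc : c ^ 2 = A - B := by rw [Real.sq_sqrt (by linarith)]; ring
  have hp' : p₁ ^ 2 * B + p₂ ^ 2 * A = A * B := by field_simp at hp; linarith
  obtain ⟨s, hs⟩ := exists_add_smul_dotReflect_eq_focus hA hB hc hp' ht₁ ht₂
  refine ⟨s, ?_, ?_⟩
  · simpa [dotReflect, dotProduct, Fin.sum_univ_two] using congrFun hs 0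
  · simpa [dotReflect, dotProduct, Fin.sum_univ_two] using congrFun hs 1

/-- Optical property of the ellipse: a trajectory through one focus of an ellipse
of the confocal family reflects off the ellipse into a trajectory through the
other focus. Here `n = (p₁/(a−λ), p₂/(b−λ))` is the normal to the ellipse at `p`
and the reflected velocity is `v' = v − 2(⟨v,n⟩/⟨n,n⟩)n`. -/
theorem ellipse_optical_property (a b : ℝ) (hb : 0 < b) (hba : b < a)
    (lam : ℝ) (hl : lam < b)
    (p₁ p₂ : ℝ) (hp : p₁ ^ 2 / (a - lam) + p₂ ^ 2 / (b - lam) = 1)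
    (v₁ v₂ : ℝ) (hv : (v₁, v₂) ≠ ((0 : ℝ), (0 : ℝ)))
    (hfocus : ∃ t : ℝ, p₁ + t * v₁ = Real.sqrt (a - b) ∧ p₂ + t * v₂ = 0) :
    ∃ s : ℝ,
      p₁ + s * (v₁ - 2 * ((v₁ * (p₁ / (a - lam)) + v₂ * (p₂ / (b - lam))) /
          ((p₁ / (a - lam)) * (p₁ / (a - lam)) + (p₂ / (b - lam)) * (p₂ / (b - lam)))) *
          (p₁ / (a - lam))) = -Real.sqrt (a - b) ∧
      p₂ + s * (v₂ - 2 * ((v₁ * (p₁ / (a - lam)) + v₂ * (p₂ / (b - lam))) /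
          ((p₁ / (a - lam)) * (p₁ / (a - lam)) + (p₂ / (b - lam)) * (p₂ / (b - lam)))) *
          (p₂ / (b - lam))) = 0 :=
  ellipse_optical_property_general a b hba lam hl p₁ p₂ hp v₁ v₂ hfocus
end

section
/- Let λ < b and let p = (p₁,p₂) satisfy p₁²/(a−λ) + p₂²/(b−λ) > 1 (p lies strictly outside the confocal ellipse with parameter λ). Then the set { v = (v₁,v₂) ∈ ℝ² : v₁² + v₂² = 1 and b·v₁² + a·v₂² − (v₁p₂ − p₁v₂)² = λ } has exactly 4 elements. That is, at every point strictly outside an elliptic caustic there are exactly four unit velocity vectors with that caustic (two tangent lines, each with two orientations). -/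
/-!
On the unit circle `λ = λ (v₁² + v₂²)`, so the condition `ab Λ(p, v) = λ` is the vanishing of a
binary quadratic form `Q(v) = (b - λ - p₂²) v₁² + 2 p₁ p₂ v₁ v₂ + (a - λ - p₁²) v₂²`. Its reduced
discriminant is `(a - λ)(b - λ) (p₁²/(a - λ) + p₂²/(b - λ) - 1) > 0`, so `Q` splits into two
independent linear factors. Each factor vanishes on a line through the origin, which meets the
unit circle in two antipodal points, and independence of the lines makes the four points distinct.
-/

lemma unitCircle_inter_line_eq_pair (α β : ℝ) (hαβ : 0 < α ^ 2 + β ^ 2) :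
    {v : ℝ × ℝ | v.1 ^ 2 + v.2 ^ 2 = 1 ∧ α * v.1 + β * v.2 = 0} =
      {(β / √(α ^ 2 + β ^ 2), -α / √(α ^ 2 + β ^ 2)),
        (-β / √(α ^ 2 + β ^ 2), α / √(α ^ 2 + β ^ 2))} := by
  set n := √(α ^ 2 + β ^ 2)
  have hn : n ≠ 0 := (Real.sqrt_pos.mpr hαβ).ne'
  have hn2 : n ^ 2 = α ^ 2 + β ^ 2 := Real.sq_sqrt hαβ.le
  ext v
  simp only [Set.mem_ofPred_eq, Set.mem_insert_iff, Set.mem_singleton_iff, Prod.ext_iff,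
    eq_div_iff hn]
  constructor
  · rintro ⟨hunit, hline⟩
    -- Lagrange's identity `(βx - αy)² + (αx + βy)² = (α² + β²)(x² + y²)`
    have hsq : (β * v.1 - α * v.2 - n) * (β * v.1 - α * v.2 + n) = 0 := by
      linear_combination (α ^ 2 + β ^ 2) * hunit - hn2 - (α * v.1 + β * v.2) * hline
    rcases mul_eq_zero.mp hsq with h | h
    · left
      constructor
      · linear_combination -v.1 * h + β * hunit - v.2 * hline
      · linear_combination -v.2 * h - α * hunit + v.1 * hline
    · right
      constructor
      · linear_combination v.1 * h - β * hunit + v.2 * hline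
      · linear_combination v.2 * h + α * hunit - v.1 * hline
  · rintro (⟨h1, h2⟩ | ⟨h1, h2⟩)
    · refine ⟨mul_right_cancel₀ (pow_ne_zero 2 hn) ?_, mul_right_cancel₀ hn ?_⟩
      · linear_combination (v.1 * n + β) * h1 + (v.2 * n - α) * h2 - hn2
      · linear_combination α * h1 + β * h2
    · refine ⟨mul_right_cancel₀ (pow_ne_zero 2 hn) ?_, mul_right_cancel₀ hn ?_⟩
      · linear_combination (v.1 * n - β) * h1 + (v.2 * n + α) * h2 - hn2
      · linear_combination α * h1 + β * h2

lemma ncard_unitCircle_inter_line (α β : ℝ) (hαβ : α ≠ 0 ∨ β ≠ 0) :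
    {v : ℝ × ℝ | v.1 ^ 2 + v.2 ^ 2 = 1 ∧ α * v.1 + β * v.2 = 0}.ncard = 2 := by
  have hpos : 0 < α ^ 2 + β ^ 2 := by rcases hαβ with h | h <;> positivity
  have hn : √(α ^ 2 + β ^ 2) ≠ 0 := (Real.sqrt_pos.mpr hpos).ne'
  rw [unitCircle_inter_line_eq_pair α β hpos, Set.ncard_pair]
  intro h
  obtain ⟨hβ, hα⟩ := Prod.mk.inj h
  rw [neg_div, self_eq_neg, div_eq_zero_iff, or_iff_left hn] at hβ
  rw [neg_div, neg_eq_self, div_eq_zero_iff, or_iff_left hn] at hα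
  simp [hα, hβ] at hpos

lemma ncard_unitCircle_inter_two_lines (α₁ β₁ α₂ β₂ : ℝ) (hdet : α₁ * β₂ - α₂ * β₁ ≠ 0) :
    {v : ℝ × ℝ | v.1 ^ 2 + v.2 ^ 2 = 1 ∧
      (α₁ * v.1 + β₁ * v.2) * (α₂ * v.1 + β₂ * v.2) = 0}.ncard = 4 := by
  have hunion : {v : ℝ × ℝ | v.1 ^ 2 + v.2 ^ 2 = 1 ∧
      (α₁ * v.1 + β₁ * v.2) * (α₂ * v.1 + β₂ * v.2) = 0} =
      {v : ℝ × ℝ | v.1 ^ 2 + v.2 ^ 2 = 1 ∧ α₁ * v.1 + β₁ * v.2 = 0} ∪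
      {v : ℝ × ℝ | v.1 ^ 2 + v.2 ^ 2 = 1 ∧ α₂ * v.1 + β₂ * v.2 = 0} := by
    ext v
    simp only [Set.mem_ofPred_eq, Set.mem_union, mul_eq_zero, and_or_left]
  have hdisj : Disjoint
      {v : ℝ × ℝ | v.1 ^ 2 + v.2 ^ 2 = 1 ∧ α₁ * v.1 + β₁ * v.2 = 0}
      {v : ℝ × ℝ | v.1 ^ 2 + v.2 ^ 2 = 1 ∧ α₂ * v.1 + β₂ * v.2 = 0} := by
    refine Set.disjoint_left.mpr fun v ⟨hunit, h₁⟩ ⟨_, h₂⟩ ↦ hdet ?_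
    linear_combination -(α₁ * β₂ - α₂ * β₁) * hunit + (v.1 * β₂ - v.2 * α₂) * h₁ +
      (v.2 * α₁ - v.1 * β₁) * h₂
  have h₁ := ncard_unitCircle_inter_line α₁ β₁ (by by_contra! h; simp [h.1, h.2] at hdet)
  have h₂ := ncard_unitCircle_inter_line α₂ β₂ (by by_contra! h; simp [h.1, h.2] at hdet)
  rw [hunion, Set.ncard_union_eq hdisj (Set.finite_of_ncard_pos (by omega))
    (Set.finite_of_ncard_pos (by omega)), h₁, h₂]

lemma exists_linear_factors_of_discrim_pos (A B C : ℝ) (hD : 0 < B ^ 2 - A * C) :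
    ∃ α₁ β₁ α₂ β₂ : ℝ, α₁ * β₂ - α₂ * β₁ ≠ 0 ∧ ∀ x y : ℝ,
      A * x ^ 2 + 2 * B * x * y + C * y ^ 2 = (α₁ * x + β₁ * y) * (α₂ * x + β₂ * y) := by
  rcases eq_or_ne A 0 with rfl | hA
  · have hB : B ≠ 0 := by rintro rfl; simp at hD
    exact ⟨0, 1, 2 * B, C, by simpa using hB, fun x y ↦ by ring⟩
  · set s := √(B ^ 2 - A * C)
    have hs : 0 < s := Real.sqrt_pos.mpr hD
    have hs2 : s ^ 2 = B ^ 2 - A * C := Real.sq_sqrt hD.le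
    have hA' : A * ((B - s) / A) = B - s := mul_div_cancel₀ _ hA
    refine ⟨1, (B - s) / A, A, B + s, ?_, fun x y ↦ ?_⟩
    · rw [hA']
      linarith
    · have hC : (B - s) / A * (B + s) = C := by
        rw [div_mul_eq_mul_div, div_eq_iff hA]
        linear_combination -hs2
      linear_combination (-y ^ 2) * hC - x * y * hA'

lemma ncard_unitCircle_inter_quadForm_zero (A B C : ℝ) (hD : 0 < B ^ 2 - A * C) :
    {v : ℝ × ℝ | v.1 ^ 2 + v.2 ^ 2 = 1 ∧
      A * v.1 ^ 2 + 2 * B * v.1 * v.2 + C * v.2 ^ 2 = 0}.ncard = 4 := by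
  obtain ⟨α₁, β₁, α₂, β₂, hdet, hfac⟩ := exists_linear_factors_of_discrim_pos A B C hD
  simp_rw [hfac]
  exact ncard_unitCircle_inter_two_lines α₁ β₁ α₂ β₂ hdet

theorem four_velocities_outside_elliptic_caustic_general (a b : ℝ) (hba : b < a)
    (lam : ℝ) (hl : lam < b)
    (p₁ p₂ : ℝ) (hp : p₁ ^ 2 / (a - lam) + p₂ ^ 2 / (b - lam) > 1) :
    Set.ncard {v : ℝ × ℝ | v.1 ^ 2 + v.2 ^ 2 = 1 ∧
      b * v.1 ^ 2 + a * v.2 ^ 2 - (v.1 * p₂ - p₁ * v.2) ^ 2 = lam} = 4 := by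
  have hal : 0 < a - lam := by linarith
  have hbl : 0 < b - lam := by linarith
  have hD : 0 < (p₁ * p₂) ^ 2 - (b - lam - p₂ ^ 2) * (a - lam - p₁ ^ 2) := by
    have : (p₁ * p₂) ^ 2 - (b - lam - p₂ ^ 2) * (a - lam - p₁ ^ 2) =
        (a - lam) * (b - lam) * (p₁ ^ 2 / (a - lam) + p₂ ^ 2 / (b - lam) - 1) := by
      field_simp
      ring
    rw [this]
    exact mul_pos (mul_pos hal hbl) (sub_pos.mpr hp)
  convert ncard_unitCircle_inter_quadForm_zero _ _ _ hD using 2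
  ext v
  exact and_congr_right fun hunit ↦ ⟨fun h ↦ by linear_combination h - lam * hunit,
    fun h ↦ by linear_combination h + lam * hunit⟩

/-- At every point strictly outside an elliptic caustic (`λ < b`) there are
exactly four unit velocity vectors with that caustic (two tangent lines to the
caustic through the point, each with two orientations). -/
theorem four_velocities_outside_elliptic_caustic (a b : ℝ) (hb : 0 < b) (hba : b < a)
    (lam : ℝ) (hl : lam < b)
    (p₁ p₂ : ℝ) (hp : p₁ ^ 2 / (a - lam) + p₂ ^ 2 / (b - lam) > 1) :
    Set.ncard {v : ℝ × ℝ | v.1 ^ 2 + v.2 ^ 2 = 1 ∧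
      b * v.1 ^ 2 + a * v.2 ^ 2 - (v.1 * p₂ - p₁ * v.2) ^ 2 = lam} = 4 :=
  four_velocities_outside_elliptic_caustic_general a b hba lam hl p₁ p₂ hp
end

section
/- Let b < λ < a and let p = (p₁,p₂) satisfy p₁²/(a−λ) + p₂²/(b−λ) < 1 (p lies strictly between the branches of the confocal hyperbola with parameter λ). Then the set { v = (v₁,v₂) ∈ ℝ² : v₁² + v₂² = 1 and b·v₁² + a·v₂² − (v₁p₂ − p₁v₂)² = λ } has exactly 4 elements. That is, at every point strictly inside a hyperbolic caustic there are exactly four unit velocity vectors with that caustic. -/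
/-!
On the unit circle the caustic equation `b v₁² + a v₂² - (v₁ p₂ - p₁ v₂)² = λ` is equivalent to
the homogeneous one `A v₁² + 2 B v₁ v₂ + C v₂² = 0`, with `A = b - λ - p₂²`, `B = p₁ p₂`,
`C = a - λ - p₁²`. Its discriminant is
`B² - A C = (a - λ)(λ - b)(1 - p₁²/(a - λ) - p₂²/(b - λ)) > 0`, so the form splits into two
independent linear factors. Each factor vanishes at exactly two antipodal unit vectors, and
independence keeps the two pairs apart.
-/

theorem unit_circle_inter_line_of_unit {α β : ℝ} (h : α ^ 2 + β ^ 2 = 1) :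
    {v : ℝ × ℝ | v.1 ^ 2 + v.2 ^ 2 = 1 ∧ α * v.1 + β * v.2 = 0} = {(β, -α), (-β, α)} := by
  ext ⟨x, y⟩
  simp only [Set.mem_ofPred_eq, Set.mem_insert_iff, Set.mem_singleton_iff, Prod.mk.injEq]
  constructor
  · rintro ⟨hcircle, hline⟩
    -- `c` is the coordinate of `(x, y)` along the unit direction `(β, -α)` of the line
    set c := β * x - α * y
    have hx : x = β * c := by linear_combination (-x) * h + α * hline
    have hy : y = -α * c := by linear_combination (-y) * h + β * hline
    have hc : c ^ 2 = 1 ^ 2 := by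
      linear_combination (x ^ 2 + y ^ 2) * h + hcircle - (α * x + β * y) * hline
    rcases sq_eq_sq_iff_eq_or_eq_neg.1 hc with hc | hc
    · left; constructor <;> simp [hx, hy, hc]
    · right; constructor <;> simp [hx, hy, hc]
  · rintro (⟨rfl, rfl⟩ | ⟨rfl, rfl⟩) <;> exact ⟨by linear_combination h, by ring⟩

theorem ncard_unit_circle_inter_line {α β : ℝ} (h : α ^ 2 + β ^ 2 ≠ 0) :
    {v : ℝ × ℝ | v.1 ^ 2 + v.2 ^ 2 = 1 ∧ α * v.1 + β * v.2 = 0}.ncard = 2 := by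
  set r := √(α ^ 2 + β ^ 2)
  have hr : r ≠ 0 := by positivity
  have hunit : (α / r) ^ 2 + (β / r) ^ 2 = 1 := by
    rw [div_pow, div_pow, ← add_div, Real.sq_sqrt (by positivity), div_self h]
  have hscale : {v : ℝ × ℝ | v.1 ^ 2 + v.2 ^ 2 = 1 ∧ α * v.1 + β * v.2 = 0} =
      {v : ℝ × ℝ | v.1 ^ 2 + v.2 ^ 2 = 1 ∧ α / r * v.1 + β / r * v.2 = 0} := by
    ext v
    rw [Set.mem_ofPred_eq, Set.mem_ofPred_eq, div_mul_eq_mul_div, div_mul_eq_mul_div,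
      ← add_div, div_eq_zero_iff, or_iff_left hr]
  rw [hscale, unit_circle_inter_line_of_unit hunit, Set.ncard_pair]
  intro heq
  obtain ⟨hβ, hα⟩ := Prod.mk.inj heq
  have hβ0 : β / r = 0 := by linarith
  have hα0 : α / r = 0 := by linarith
  simp [hα0, hβ0] at hunit

theorem sq_add_sq_ne_zero_of_mul_sub_mul_ne_zero {α β γ δ : ℝ} (h : α * δ - β * γ ≠ 0) :
    α ^ 2 + β ^ 2 ≠ 0 := by
  intro h0
  obtain ⟨rfl, rfl⟩ := mul_self_add_mul_self_eq_zero.1 (by simpa only [sq] using h0)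
  exact h (by ring)

theorem ncard_unit_circle_inter_lines {α β γ δ : ℝ} (h : α * δ - β * γ ≠ 0) :
    {v : ℝ × ℝ | v.1 ^ 2 + v.2 ^ 2 = 1 ∧ (α * v.1 + β * v.2) * (γ * v.1 + δ * v.2) = 0}.ncard
      = 4 := by
  have hunion : {v : ℝ × ℝ | v.1 ^ 2 + v.2 ^ 2 = 1 ∧
      (α * v.1 + β * v.2) * (γ * v.1 + δ * v.2) = 0} =
      {v : ℝ × ℝ | v.1 ^ 2 + v.2 ^ 2 = 1 ∧ α * v.1 + β * v.2 = 0} ∪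
        {v : ℝ × ℝ | v.1 ^ 2 + v.2 ^ 2 = 1 ∧ γ * v.1 + δ * v.2 = 0} := by
    ext v
    simp only [Set.mem_ofPred_eq, Set.mem_union, mul_eq_zero, and_or_left]
  have hdisj : Disjoint
      {v : ℝ × ℝ | v.1 ^ 2 + v.2 ^ 2 = 1 ∧ α * v.1 + β * v.2 = 0}
      {v : ℝ × ℝ | v.1 ^ 2 + v.2 ^ 2 = 1 ∧ γ * v.1 + δ * v.2 = 0} := by
    refine Set.disjoint_left.2 fun v ⟨hcircle, h₁⟩ ⟨_, h₂⟩ => ?_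
    have hv₁ : v.1 = 0 := (mul_eq_zero.1 (by linear_combination δ * h₁ - β * h₂ :
      (α * δ - β * γ) * v.1 = 0)).resolve_left h
    have hv₂ : v.2 = 0 := (mul_eq_zero.1 (by linear_combination α * h₂ - γ * h₁ :
      (α * δ - β * γ) * v.2 = 0)).resolve_left h
    simp [hv₁, hv₂] at hcircle
  have h₁ := ncard_unit_circle_inter_line (sq_add_sq_ne_zero_of_mul_sub_mul_ne_zero h)
  have h₂ := ncard_unit_circle_inter_line <|
    sq_add_sq_ne_zero_of_mul_sub_mul_ne_zero (α := γ) (β := δ) (γ := α) (δ := β)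
      fun h' => h (by linear_combination -h')
  rw [hunion, Set.ncard_union_eq hdisj (Set.finite_of_ncard_ne_zero (by simp [h₁]))
    (Set.finite_of_ncard_ne_zero (by simp [h₂])), h₁, h₂]

theorem ncard_unit_circle_inter_indefinite_form {A B C : ℝ} (hA : A ≠ 0)
    (hdisc : A * C < B ^ 2) :
    {v : ℝ × ℝ | v.1 ^ 2 + v.2 ^ 2 = 1 ∧ A * v.1 ^ 2 + 2 * B * v.1 * v.2 + C * v.2 ^ 2 = 0}.ncard
      = 4 := by
  set s := √(B ^ 2 - A * C)
  have hs : 0 < s := Real.sqrt_pos.2 (by linarith)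
  have hs2 : s ^ 2 = B ^ 2 - A * C := Real.sq_sqrt (by linarith)
  have hfactor : ∀ x y : ℝ, (A * x + (B - s) * y) * (A * x + (B + s) * y) =
      A * (A * x ^ 2 + 2 * B * x * y + C * y ^ 2) := by
    intro x y; linear_combination (-y ^ 2) * hs2
  have hdet : A * (B + s) - (B - s) * A ≠ 0 := by
    rw [show A * (B + s) - (B - s) * A = 2 * A * s by ring]; positivity
  rw [← ncard_unit_circle_inter_lines hdet]
  simp only [hfactor, mul_eq_zero, hA, false_or]

theorem four_velocities_inside_hyperbolic_caustic_general (a b : ℝ)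
    (lam : ℝ) (hlb : b < lam) (hla : lam < a)
    (p₁ p₂ : ℝ) (hp : p₁ ^ 2 / (a - lam) + p₂ ^ 2 / (b - lam) < 1) :
    Set.ncard {v : ℝ × ℝ | v.1 ^ 2 + v.2 ^ 2 = 1 ∧
      b * v.1 ^ 2 + a * v.2 ^ 2 - (v.1 * p₂ - p₁ * v.2) ^ 2 = lam} = 4 := by
  have hal : a - lam ≠ 0 := by linarith
  have hbl : b - lam ≠ 0 := by linarith
  have hA : b - lam - p₂ ^ 2 ≠ 0 := (by linarith [sq_nonneg p₂] : b - lam - p₂ ^ 2 < 0).ne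
  have hdisc : (b - lam - p₂ ^ 2) * (a - lam - p₁ ^ 2) < (p₁ * p₂) ^ 2 := by
    have hdisc_eq : (p₁ * p₂) ^ 2 - (b - lam - p₂ ^ 2) * (a - lam - p₁ ^ 2) =
        (a - lam) * (lam - b) * (1 - (p₁ ^ 2 / (a - lam) + p₂ ^ 2 / (b - lam))) := by
      field_simp; ring
    have : 0 < (a - lam) * (lam - b) * (1 - (p₁ ^ 2 / (a - lam) + p₂ ^ 2 / (b - lam))) :=
      mul_pos (mul_pos (by linarith) (by linarith)) (by linarith)
    linarith
  rw [← ncard_unit_circle_inter_indefinite_form hA hdisc]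
  congr 1
  refine Set.ext fun v => and_congr_right fun hcircle =>
    ⟨fun h => by linear_combination h - lam * hcircle,
      fun h => by linear_combination h + lam * hcircle⟩

/-- At every point strictly inside a hyperbolic caustic (`b < λ < a`) there are
exactly four unit velocity vectors with that caustic. -/
theorem four_velocities_inside_hyperbolic_caustic (a b : ℝ) (hb : 0 < b) (hba : b < a)
    (lam : ℝ) (hlb : b < lam) (hla : lam < a)
    (p₁ p₂ : ℝ) (hp : p₁ ^ 2 / (a - lam) + p₂ ^ 2 / (b - lam) < 1) :
    Set.ncard {v : ℝ × ℝ | v.1 ^ 2 + v.2 ^ 2 = 1 ∧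
      b * v.1 ^ 2 + a * v.2 ^ 2 - (v.1 * p₂ - p₁ * v.2) ^ 2 = lam} = 4 :=
  four_velocities_inside_hyperbolic_caustic_general a b lam hlb hla p₁ p₂ hp
end

section
/- Let λ < b and let p = (p₁,p₂) satisfy p₁²/(a−λ) + p₂²/(b−λ) = 1 (p lies on the confocal ellipse with parameter λ). Then the set { v = (v₁,v₂) ∈ ℝ² : v₁² + v₂² = 1 and b·v₁² + a·v₂² − (v₁p₂ − p₁v₂)² = λ } has exactly 2 elements. That is, at a point of the caustic itself there are exactly two unit velocity vectors with that caustic (the two orientations of the tangent direction). -/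
/-!
Write `A = a - λ`, `B = b - λ`, so that `p` satisfies `B p₁² + A p₂² = A B`, and let
`n = (B p₁, A p₂)` be the normal of the ellipse at `p`. For a unit vector `v` one has the identity
`(n ⬝ v)² = A B (b v₁² + a v₂² - (v₁ p₂ - p₁ v₂)² - λ)`, so `v` has caustic `λ` exactly when it is
orthogonal to `n`, i.e. tangent to the ellipse. A nonzero vector of the plane has exactly two unit
vectors orthogonal to it.
-/

theorem unit_and_orthogonal_iff {c₁ c₂ r : ℝ} (hr : r ≠ 0) (hr2 : r ^ 2 = c₁ ^ 2 + c₂ ^ 2)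
    (v : ℝ × ℝ) :
    (v.1 ^ 2 + v.2 ^ 2 = 1 ∧ c₁ * v.1 + c₂ * v.2 = 0) ↔
      v = (c₂ / r, -c₁ / r) ∨ v = (-c₂ / r, c₁ / r) := by
  obtain ⟨v₁, v₂⟩ := v
  simp only [Prod.mk.injEq]
  constructor
  · rintro ⟨hu, horth⟩
    -- `s` is the coordinate of `v` along `(c₂, -c₁)`, and `s² + (c ⬝ v)² = r² ‖v‖²`.
    set s := c₂ * v₁ - c₁ * v₂
    have hs : (s - r) * (s + r) = 0 := by
      linear_combination (c₁ ^ 2 + c₂ ^ 2) * hu - (c₁ * v₁ + c₂ * v₂) * horth - hr2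
    have hv₁ : v₁ = c₂ * s / r ^ 2 := by
      field_simp; linear_combination v₁ * hr2 + c₁ * horth
    have hv₂ : v₂ = -c₁ * s / r ^ 2 := by
      field_simp; linear_combination v₂ * hr2 + c₂ * horth
    rcases mul_eq_zero.mp hs with hsr | hsr
    · left
      rw [hv₁, hv₂, sub_eq_zero.mp hsr]
      constructor <;> field_simp
    · right
      rw [hv₁, hv₂, add_eq_zero_iff_eq_neg.mp hsr]
      constructor <;> field_simp
  · rintro (⟨rfl, rfl⟩ | ⟨rfl, rfl⟩) <;> refine ⟨?_, by ring⟩ <;> field_simp <;>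
      linear_combination -hr2

theorem ncard_unit_orthogonal (c : ℝ × ℝ) (hc : c ≠ 0) :
    {v : ℝ × ℝ | v.1 ^ 2 + v.2 ^ 2 = 1 ∧ c.1 * v.1 + c.2 * v.2 = 0}.ncard = 2 := by
  have hpos : 0 < c.1 ^ 2 + c.2 ^ 2 := by
    have : c.1 ≠ 0 ∨ c.2 ≠ 0 := by
      contrapose! hc
      exact Prod.ext hc.1 hc.2
    rcases this with h | h <;> positivity
  obtain ⟨r, hr, hr2⟩ : ∃ r : ℝ, 0 < r ∧ r ^ 2 = c.1 ^ 2 + c.2 ^ 2 :=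
    ⟨√(c.1 ^ 2 + c.2 ^ 2), Real.sqrt_pos.mpr hpos, Real.sq_sqrt hpos.le⟩
  have hset : {v : ℝ × ℝ | v.1 ^ 2 + v.2 ^ 2 = 1 ∧ c.1 * v.1 + c.2 * v.2 = 0} =
      {(c.2 / r, -c.1 / r), (-c.2 / r, c.1 / r)} :=
    Set.ext (unit_and_orthogonal_iff hr.ne' hr2)
  rw [hset, Set.ncard_pair]
  intro h
  simp only [Prod.mk.injEq, div_left_inj' hr.ne'] at h
  apply hc
  ext <;> simp only [Prod.fst_zero, Prod.snd_zero] <;> linarith [h.1, h.2]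

theorem sq_normal_inner_eq {a b lam p₁ p₂ v₁ v₂ : ℝ}
    (hp : (b - lam) * p₁ ^ 2 + (a - lam) * p₂ ^ 2 = (a - lam) * (b - lam))
    (hv : v₁ ^ 2 + v₂ ^ 2 = 1) :
    ((b - lam) * p₁ * v₁ + (a - lam) * p₂ * v₂) ^ 2 =
      (a - lam) * (b - lam) * (b * v₁ ^ 2 + a * v₂ ^ 2 - (v₁ * p₂ - p₁ * v₂) ^ 2 - lam) := by
  linear_combination ((b - lam) * v₁ ^ 2 + (a - lam) * v₂ ^ 2) * hp
    - (a - lam) * (b - lam) * lam * hv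

theorem caustic_eq_iff_normal_inner_eq_zero {a b lam p₁ p₂ v₁ v₂ : ℝ}
    (ha : a - lam ≠ 0) (hb : b - lam ≠ 0)
    (hp : (b - lam) * p₁ ^ 2 + (a - lam) * p₂ ^ 2 = (a - lam) * (b - lam))
    (hv : v₁ ^ 2 + v₂ ^ 2 = 1) :
    b * v₁ ^ 2 + a * v₂ ^ 2 - (v₁ * p₂ - p₁ * v₂) ^ 2 = lam ↔
      (b - lam) * p₁ * v₁ + (a - lam) * p₂ * v₂ = 0 := by
  refine sub_eq_zero.symm.trans ?_
  rw [← mul_right_inj' (mul_ne_zero ha hb), mul_zero, ← sq_normal_inner_eq hp hv,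
    pow_eq_zero_iff two_ne_zero]

theorem two_velocities_on_elliptic_caustic_general (a b : ℝ) (hba : b < a)
    (lam : ℝ) (hl : lam < b)
    (p₁ p₂ : ℝ) (hp : p₁ ^ 2 / (a - lam) + p₂ ^ 2 / (b - lam) = 1) :
    Set.ncard {v : ℝ × ℝ | v.1 ^ 2 + v.2 ^ 2 = 1 ∧
      b * v.1 ^ 2 + a * v.2 ^ 2 - (v.1 * p₂ - p₁ * v.2) ^ 2 = lam} = 2 := by
  have ha : a - lam ≠ 0 := (sub_pos.mpr (hl.trans hba)).ne'
  have hb : b - lam ≠ 0 := (sub_pos.mpr hl).ne'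
  have hp' : (b - lam) * p₁ ^ 2 + (a - lam) * p₂ ^ 2 = (a - lam) * (b - lam) := by
    field_simp at hp; linear_combination hp
  have hnormal : ((b - lam) * p₁, (a - lam) * p₂) ≠ 0 := by
    intro h
    simp only [Prod.mk_eq_zero, mul_eq_zero, ha, hb, false_or] at h
    simp [h.1, h.2] at hp
  convert ncard_unit_orthogonal _ hnormal using 4 with v
  refine (and_congr_right fun hv => ?_)
  rw [caustic_eq_iff_normal_inner_eq_zero ha hb hp' hv, mul_assoc, mul_assoc]

/-- At a point of an elliptic caustic itself (`λ < b`) there are exactly two unit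
velocity vectors with that caustic (the two orientations of the tangent direction). -/
theorem two_velocities_on_elliptic_caustic (a b : ℝ) (hb : 0 < b) (hba : b < a)
    (lam : ℝ) (hl : lam < b)
    (p₁ p₂ : ℝ) (hp : p₁ ^ 2 / (a - lam) + p₂ ^ 2 / (b - lam) = 1) :
    Set.ncard {v : ℝ × ℝ | v.1 ^ 2 + v.2 ^ 2 = 1 ∧
      b * v.1 ^ 2 + a * v.2 ^ 2 - (v.1 * p₂ - p₁ * v.2) ^ 2 = lam} = 2 :=
  two_velocities_on_elliptic_caustic_general a b hba lam hl p₁ p₂ hp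
end

section
/- Let p = (p₁,p₂) ∈ ℝ². Then Λ(p,v) > 0 for every nonzero v ∈ ℝ² if and only if p₁²/a + p₂²/b < 1, i.e. the quadratic form v ↦ Λ(p,v) is positive definite exactly when p lies strictly inside the ellipse of the confocal family with parameter λ = 0. -/
theorem binary_quadratic_form_pos_iff {R : Type*} [CommRing R] [LinearOrder R] [IsStrictOrderedRing R]
    (A B C : R) :
    (∀ x y : R, (x, y) ≠ (0, 0) → 0 < A * x ^ 2 + 2 * B * x * y + C * y ^ 2) ↔
      0 < A ∧ B ^ 2 < A * C := by
  constructor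
  · intro h
    have hA : 0 < A := by simpa using h 1 0 (by simp)
    have hAdisc : 0 < A * (A * C - B ^ 2) := by
      have := h (-B) A (by simp [hA.ne'])
      linarith
    exact ⟨hA, by nlinarith [pos_of_mul_pos_right hAdisc hA.le]⟩
  · rintro ⟨hA, hdisc⟩ x y hxy
    have hsq : A * (A * x ^ 2 + 2 * B * x * y + C * y ^ 2) =
        (A * x + B * y) ^ 2 + (A * C - B ^ 2) * y ^ 2 := by ring
    refine pos_of_mul_pos_right (hsq ▸ ?_) hA.le
    rcases eq_or_ne y 0 with rfl | hy
    · have hx : x ≠ 0 := by simpa using hxy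
      simpa using sq_pos_of_ne_zero (mul_ne_zero hA.ne' hx)
    · have := mul_pos (sub_pos.mpr hdisc) (sq_pos_of_ne_zero hy)
      positivity

theorem mul_caustic (a b p₁ p₂ v₁ v₂ : ℝ) (ha : a ≠ 0) (hb : b ≠ 0) :
    a * b * caustic a b p₁ p₂ v₁ v₂ =
      (b - p₂ ^ 2) * v₁ ^ 2 + 2 * (p₁ * p₂) * v₁ * v₂ + (a - p₁ ^ 2) * v₂ ^ 2 := by
  unfold caustic
  field_simp
  ring

theorem inside_ellipse_iff (a b p₁ p₂ : ℝ) (ha : 0 < a) (hb : 0 < b) :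
    p₁ ^ 2 / a + p₂ ^ 2 / b < 1 ↔
      0 < b - p₂ ^ 2 ∧ (p₁ * p₂) ^ 2 < (b - p₂ ^ 2) * (a - p₁ ^ 2) := by
  have hdisc : (b - p₂ ^ 2) * (a - p₁ ^ 2) - (p₁ * p₂) ^ 2 =
      a * b - (b * p₁ ^ 2 + a * p₂ ^ 2) := by ring
  rw [div_add_div _ _ ha.ne' hb.ne', div_lt_one (mul_pos ha hb)]
  constructor
  · intro h
    exact ⟨by nlinarith [mul_nonneg hb.le (sq_nonneg p₁)], by linarith⟩
  · rintro ⟨-, h⟩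
    linarith

/-- The quadratic form `v ↦ Λ(p,v)` is positive definite exactly when `p` lies
strictly inside the ellipse of the confocal family with parameter `λ = 0`. -/
theorem caustic_posdef_iff_inside (a b : ℝ) (hb : 0 < b) (hba : b < a)
    (p₁ p₂ : ℝ) :
    (∀ v₁ v₂ : ℝ, (v₁, v₂) ≠ ((0 : ℝ), (0 : ℝ)) → caustic a b p₁ p₂ v₁ v₂ > 0) ↔
      p₁ ^ 2 / a + p₂ ^ 2 / b < 1 := by
  have ha : 0 < a := hb.trans hba
  have hcaustic_pos (v₁ v₂ : ℝ) : caustic a b p₁ p₂ v₁ v₂ > 0 ↔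
      0 < (b - p₂ ^ 2) * v₁ ^ 2 + 2 * (p₁ * p₂) * v₁ * v₂ + (a - p₁ ^ 2) * v₂ ^ 2 := by
    rw [← mul_caustic a b p₁ p₂ v₁ v₂ ha.ne' hb.ne', mul_pos_iff_of_pos_left (mul_pos ha hb)]
  simp only [hcaustic_pos]
  rw [binary_quadratic_form_pos_iff, inside_ellipse_iff a b p₁ p₂ ha hb]
end

section
/- Let λ₀ < b, let p = (p₁,p₂) satisfy p₁²/(a−λ₀) + p₂²/(b−λ₀) ≤ 1 (p lies inside or on the confocal ellipse with parameter λ₀), and let v = (v₁,v₂) be a unit vector (v₁² + v₂² = 1). If λ := ab·Λ(p,v) satisfies λ < b, then λ ≥ λ₀. That is, for a billiard whose domain lies inside the ellipse with parameter λ₀, every elliptic caustic parameter is at least λ₀: the caustic ellipse lies inside the boundary ellipse. -/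
/-- Lagrange's identity for the weighted Cauchy–Schwarz inequality. -/
theorem mul_sub_sq_cross_eq {A B : ℝ} (hA : A ≠ 0) (hB : B ≠ 0) (p₁ p₂ v₁ v₂ : ℝ) :
    (B * v₁ ^ 2 + A * v₂ ^ 2) * (p₁ ^ 2 / A + p₂ ^ 2 / B) - (v₁ * p₂ - p₁ * v₂) ^ 2
      = (B * v₁ * p₁ + A * v₂ * p₂) ^ 2 / (A * B) := by
  field_simp
  ring

theorem sq_cross_le_mul {A B : ℝ} (hA : 0 < A) (hB : 0 < B) (p₁ p₂ v₁ v₂ : ℝ) :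
    (v₁ * p₂ - p₁ * v₂) ^ 2 ≤ (B * v₁ ^ 2 + A * v₂ ^ 2) * (p₁ ^ 2 / A + p₂ ^ 2 / B) := by
  have h := mul_sub_sq_cross_eq hA.ne' hB.ne' p₁ p₂ v₁ v₂
  have : 0 ≤ (B * v₁ * p₁ + A * v₂ * p₂) ^ 2 / (A * B) := by positivity
  linarith

theorem sq_cross_le_of_mem_ellipse {A B p₁ p₂ : ℝ} (hA : 0 < A) (hB : 0 < B)
    (hp : p₁ ^ 2 / A + p₂ ^ 2 / B ≤ 1) (v₁ v₂ : ℝ) :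
    (v₁ * p₂ - p₁ * v₂) ^ 2 ≤ B * v₁ ^ 2 + A * v₂ ^ 2 :=
  (sq_cross_le_mul hA hB p₁ p₂ v₁ v₂).trans <|
    mul_le_of_le_one_right (by positivity) hp

theorem elliptic_caustic_inside_boundary_general (a b : ℝ) (hb : 0 < b) (hba : b < a)
    (lam₀ : ℝ) (hl₀ : lam₀ < b)
    (p₁ p₂ : ℝ) (hp : p₁ ^ 2 / (a - lam₀) + p₂ ^ 2 / (b - lam₀) ≤ 1)
    (v₁ v₂ : ℝ) (hv : v₁ ^ 2 + v₂ ^ 2 = 1) :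
    a * b * caustic a b p₁ p₂ v₁ v₂ ≥ lam₀ := by
  have hcross := sq_cross_le_of_mem_ellipse (sub_pos.2 (hl₀.trans hba)) (sub_pos.2 hl₀) hp v₁ v₂
  rw [mul_mul_caustic (hb.trans hba).ne' hb.ne']
  linear_combination hcross - lam₀ * hv

/-- For a billiard whose domain lies inside the ellipse with parameter `λ₀`,
every elliptic caustic parameter is at least `λ₀`: the caustic ellipse lies
inside the boundary ellipse. -/
theorem elliptic_caustic_inside_boundary (a b : ℝ) (hb : 0 < b) (hba : b < a)
    (lam₀ : ℝ) (hl₀ : lam₀ < b)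
    (p₁ p₂ : ℝ) (hp : p₁ ^ 2 / (a - lam₀) + p₂ ^ 2 / (b - lam₀) ≤ 1)
    (v₁ v₂ : ℝ) (hv : v₁ ^ 2 + v₂ ^ 2 = 1)
    (hl : a * b * caustic a b p₁ p₂ v₁ v₂ < b) :
    a * b * caustic a b p₁ p₂ v₁ v₂ ≥ lam₀ :=
  elliptic_caustic_inside_boundary_general a b hb hba lam₀ hl₀ p₁ p₂ hp v₁ v₂ hv
end
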